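/- arXiv:1812.08089 — 2 statements merged into one kernel-verified Lean document; each statement's English description precedes it below -/
import Mathlib

section
/- Descent lemma for the joint SVT iteration: for any step size τ ∈ (0, 1/max_{it}x_{it}²), any matrices (Θ, M), and any k ≥ 1, F(Θ, M) − F(Θ_{k+1}, M_{k+1}) ≥ τ⁻¹(‖Θ_{k+1} − Θ‖_F² − ‖Θ_k − Θ‖_F²). -/
/-!
Write `Θ₀ = Θ k`, `Θ₁ = Θ (k + 1)`, `M₀ = M k`. Entrywise, an exact quadratic identity bounds
`‖Θ₁ - Θ'‖² - ‖Θ₀ - Θ'‖²` by `τ` times the loss gap plus two inner products; the defect is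
`τ (M₀ - M' + x (Θ₀ - Θ'))² + (1 - τ x²) (Θ₁ - Θ₀)²`, nonnegative by the step-size condition.
The two inner products are controlled by the first-order optimality conditions of the proximal
steps producing `Θ₁` and `M₀`, which need convexity of the nuclear norm. Convexity follows
from the duality `‖B‖ₙ = max {⟪W, B⟫ : ‖W‖ₒₚ ≤ 1}`, the maximum being attained at the polar
factor of `B`. Finally `M (k + 1)` does at least as well as `M₀` in its own proximal problem.
-/
open Matrix BigOperators

/-- Squared Frobenius norm of a real matrix. -/
noncomputable def frobSq {m n : ℕ} (A : Matrix (Fin m) (Fin n) ℝ) : ℝ :=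
  ∑ i, ∑ j, A i j ^ 2

/-- Singular values of a real matrix: square roots of the eigenvalues of `Aᴴ * A`. -/
noncomputable def singVals {m n : ℕ} (A : Matrix (Fin m) (Fin n) ℝ) : Fin n → ℝ :=
  fun j => Real.sqrt ((Matrix.isHermitian_conjTranspose_mul_self A).eigenvalues j)

/-- Nuclear norm: sum of the singular values. -/
noncomputable def nuclearNorm {m n : ℕ} (A : Matrix (Fin m) (Fin n) ℝ) : ℝ :=
  ∑ j, singVals A j

/-- Operator (spectral) norm: largest singular value. -/
noncomputable def opNorm {m n : ℕ} (A : Matrix (Fin m) (Fin n) ℝ) : ℝ :=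
  ⨆ j, singVals A j

/-- `B` is the output of the soft singular value thresholding operator `S_lam` applied to `A`,
characterized by its proximal property: `S_lam A` is the minimizer of
`‖A − B‖_F² + 2·lam·‖B‖ₙ` (cf. Statement 9). -/
def IsSVT {N T : ℕ} (lam : ℝ) (A B : Matrix (Fin N) (Fin T) ℝ) : Prop :=
  ∀ C : Matrix (Fin N) (Fin T) ℝ,
    frobSq (A - B) + 2 * lam * nuclearNorm B ≤ frobSq (A - C) + 2 * lam * nuclearNorm C

/-- The nuclear-norm penalized objective `F(Θ, M)`. -/
noncomputable def Fobj {N T : ℕ} (Y X : Matrix (Fin N) (Fin T) ℝ) (ν₁ ν₂ : ℝ)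
    (Θ M : Matrix (Fin N) (Fin T) ℝ) : ℝ :=
  frobSq (Y - M - X ⊙ Θ) + ν₂ * nuclearNorm M + ν₁ * nuclearNorm Θ

noncomputable def frobInner {m n : Type*} [Fintype m] [Fintype n] (U V : Matrix m n ℝ) : ℝ :=
  ∑ i, ∑ j, U i j * V i j

theorem frobSq_sub_add_smul_sub {m n : ℕ} (A B C : Matrix (Fin m) (Fin n) ℝ) (t : ℝ) :
    frobSq (A - (B + t • (C - B))) =
      frobSq (A - B) - 2 * t * frobInner (A - B) (C - B) + t ^ 2 * frobSq (C - B) := by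
  simp only [frobSq, frobInner, Matrix.sub_apply, Matrix.add_apply, Matrix.smul_apply, smul_eq_mul,
    Finset.mul_sum, ← Finset.sum_sub_distrib, ← Finset.sum_add_distrib]
  exact Finset.sum_congr rfl fun i _ => Finset.sum_congr rfl fun j _ => by ring

section OrthonormalBasis

variable {ι n : Type*} [Fintype ι] [Fintype n] (b : OrthonormalBasis ι ℝ (EuclideanSpace ℝ n))

theorem OrthonormalBasis.dotProduct_eq_sum (u w : n → ℝ) :
    u ⬝ᵥ w = ∑ j, (u ⬝ᵥ b j) * (w ⬝ᵥ b j) := by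
  have h := b.sum_inner_mul_inner (WithLp.toLp 2 w) (WithLp.toLp 2 u)
  simp only [EuclideanSpace.inner_eq_star_dotProduct, star_trivial] at h
  rw [← h]
  refine Finset.sum_congr rfl fun j _ => ?_
  rw [dotProduct_comm (b j)]
  ring

theorem OrthonormalBasis.dotProduct_apply_apply [DecidableEq ι] (j l : ι) :
    b j ⬝ᵥ b l = if j = l then 1 else 0 := by
  simpa [EuclideanSpace.inner_eq_star_dotProduct, dotProduct_comm]
    using orthonormal_iff_ite.mp b.orthonormal j l

variable {m : Type*} [Fintype m]

theorem frobInner_eq_sum_mulVec_dotProduct (W B : Matrix m n ℝ) :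
    frobInner W B = ∑ j, (W *ᵥ b j) ⬝ᵥ (B *ᵥ b j) := by
  simp only [frobInner, dotProduct, Finset.sum_comm (γ := ι)]
  refine Finset.sum_congr rfl fun i _ => ?_
  exact b.dotProduct_eq_sum (W i) (B i)

end OrthonormalBasis

theorem dotProduct_le_of_dotProduct_self_le_one {n : Type*} [Fintype n] {u w : n → ℝ} {σ : ℝ}
    (hu : u ⬝ᵥ u ≤ 1) (hw : w ⬝ᵥ w = σ ^ 2) (hσ : 0 ≤ σ) : u ⬝ᵥ w ≤ σ := by
  refine (abs_le_of_sq_le_sq' ?_ hσ).2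
  calc (u ⬝ᵥ w) ^ 2 ≤ (u ⬝ᵥ u) * (w ⬝ᵥ w) := by
        simpa only [dotProduct, sq] using Finset.sum_mul_sq_le_sq_mul_sq Finset.univ u w
    _ ≤ 1 * σ ^ 2 := by rw [hw]; gcongr
    _ = σ ^ 2 := one_mul _

theorem singVals_nonneg {m n : ℕ} (A : Matrix (Fin m) (Fin n) ℝ) (j : Fin n) :
    0 ≤ singVals A j :=
  Real.sqrt_nonneg _

noncomputable def rightSingularBasis {m n : ℕ} (A : Matrix (Fin m) (Fin n) ℝ) :
    OrthonormalBasis (Fin n) ℝ (EuclideanSpace ℝ (Fin n)) :=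
  (isHermitian_conjTranspose_mul_self A).eigenvectorBasis

theorem mulVec_rightSingularBasis_dotProduct {m n : ℕ} (A : Matrix (Fin m) (Fin n) ℝ)
    (j l : Fin n) :
    (A *ᵥ rightSingularBasis A j) ⬝ᵥ (A *ᵥ rightSingularBasis A l) =
      if j = l then singVals A j ^ 2 else 0 := by
  set b := rightSingularBasis A
  have hA := isHermitian_conjTranspose_mul_self A
  have h : (A *ᵥ b j) ⬝ᵥ (A *ᵥ b l) = hA.eigenvalues l * (b j ⬝ᵥ b l) := by
    have hAAb : (Aᴴ * A) *ᵥ b l = hA.eigenvalues l • b l := hA.mulVec_eigenvectorBasis l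
    rw [dotProduct_mulVec, vecMul_mulVec, ← dotProduct_mulVec,
      ← conjTranspose_eq_transpose_of_trivial, hAAb, dotProduct_smul, smul_eq_mul]
  rw [h, b.dotProduct_apply_apply]
  split_ifs with hjl
  · subst hjl
    rw [singVals, Real.sq_sqrt ((posSemidef_conjTranspose_mul_self A).eigenvalues_nonneg j),
      mul_one]
  · rw [mul_zero]

def IsContraction {m n : Type*} [Fintype m] [Fintype n] (W : Matrix m n ℝ) : Prop :=
  ∀ q : n → ℝ, (W *ᵥ q) ⬝ᵥ (W *ᵥ q) ≤ q ⬝ᵥ q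

theorem IsContraction.frobInner_le_nuclearNorm {m n : ℕ} {W : Matrix (Fin m) (Fin n) ℝ}
    (hW : IsContraction W) (B : Matrix (Fin m) (Fin n) ℝ) : frobInner W B ≤ nuclearNorm B := by
  set b := rightSingularBasis B
  rw [frobInner_eq_sum_mulVec_dotProduct b, nuclearNorm]
  refine Finset.sum_le_sum fun j _ => dotProduct_le_of_dotProduct_self_le_one ?_ ?_
    (singVals_nonneg B j)
  · simpa [b.dotProduct_apply_apply] using hW (b j)
  · simpa using mulVec_rightSingularBasis_dotProduct B j j

theorem exists_isContraction_frobInner_eq_nuclearNorm {m n : ℕ} (A : Matrix (Fin m) (Fin n) ℝ) :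
    ∃ W, IsContraction W ∧ frobInner W A = nuclearNorm A := by
  set b := rightSingularBasis A
  set σ := singVals A
  have hAb : ∀ j l, (A *ᵥ b j) ⬝ᵥ (A *ᵥ b l) = if j = l then σ j ^ 2 else 0 :=
    mulVec_rightSingularBasis_dotProduct A
  -- `W = ∑ σⱼ⁻¹ (A vⱼ) vⱼᵀ`, the polar factor of `A`; `0⁻¹ = 0` takes care of vanishing `σⱼ`.
  set W := ∑ j, (σ j)⁻¹ • vecMulVec (A *ᵥ b j) (b j)
  have hW : ∀ q, W *ᵥ q = ∑ j, ((σ j)⁻¹ * (b j ⬝ᵥ q)) • (A *ᵥ b j) := by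
    intro q
    simp only [W, sum_mulVec, smul_mulVec, vecMulVec_mulVec, op_smul_eq_smul, smul_smul]
  refine ⟨W, fun q => ?_, ?_⟩
  · calc (W *ᵥ q) ⬝ᵥ (W *ᵥ q) = ∑ j, ((σ j)⁻¹ * σ j) ^ 2 * (b j ⬝ᵥ q) ^ 2 := by
          simp only [hW, dotProduct_sum, sum_dotProduct, dotProduct_smul, smul_dotProduct,
            smul_eq_mul, hAb, mul_ite, mul_zero, Finset.sum_ite_eq', Finset.mem_univ, if_true]
          exact Finset.sum_congr rfl fun j _ => by ring
      _ ≤ ∑ j, (b j ⬝ᵥ q) ^ 2 := by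
          refine Finset.sum_le_sum fun j _ => mul_le_of_le_one_left (sq_nonneg _) ?_
          rcases eq_or_ne (σ j) 0 with h | h <;> simp [h]
      _ = q ⬝ᵥ q := by
          rw [b.dotProduct_eq_sum q q]
          exact Finset.sum_congr rfl fun j _ => by rw [dotProduct_comm, sq]
  · rw [frobInner_eq_sum_mulVec_dotProduct b, nuclearNorm]
    refine Finset.sum_congr rfl fun j _ => ?_
    simp only [hW, sum_dotProduct, smul_dotProduct, smul_eq_mul, b.dotProduct_apply_apply, hAb,
      mul_ite, mul_one, mul_zero, ite_mul, zero_mul, Finset.sum_ite_eq', Finset.mem_univ, if_true]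
    rw [sq, ← mul_assoc, inv_mul_mul_self]

theorem convexOn_nuclearNorm {m n : ℕ} :
    ConvexOn ℝ Set.univ (nuclearNorm : Matrix (Fin m) (Fin n) ℝ → ℝ) := by
  refine ⟨convex_univ, fun B _ C _ s t hs ht _ => ?_⟩
  obtain ⟨W, hW, hWBC⟩ := exists_isContraction_frobInner_eq_nuclearNorm (s • B + t • C)
  have hlin : frobInner W (s • B + t • C) = s * frobInner W B + t * frobInner W C := by
    simp only [frobInner, Matrix.add_apply, Matrix.smul_apply, smul_eq_mul, Finset.mul_sum,
      ← Finset.sum_add_distrib]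
    exact Finset.sum_congr rfl fun i _ => Finset.sum_congr rfl fun j _ => by ring
  rw [← hWBC, hlin, smul_eq_mul, smul_eq_mul]
  gcongr
  exacts [hW.frobInner_le_nuclearNorm B, hW.frobInner_le_nuclearNorm C]

theorem le_of_forall_le_add_mul {a b c : ℝ} (h : ∀ t ∈ Set.Ioc (0 : ℝ) 1, a ≤ c + t * b) :
    a ≤ c := by
  have hlim : Filter.Tendsto (fun t => c + t * b) (nhdsWithin 0 (Set.Ioi 0)) (nhds c) := by
    have hcont : Continuous fun t : ℝ => c + t * b := by fun_prop
    simpa using (hcont.tendsto 0).mono_left nhdsWithin_le_nhds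
  exact ge_of_tendsto hlim (Filter.eventually_of_mem (Ioc_mem_nhdsGT one_pos) h)

/-- Compare `B` with the points `B + t • (C - B)` of the segment towards `C` and let `t → 0`. -/
theorem ConvexOn.frobInner_sub_le_of_minimizes {m n : ℕ} {g : Matrix (Fin m) (Fin n) ℝ → ℝ}
    (hg : ConvexOn ℝ Set.univ g) {lam : ℝ} (hlam : 0 ≤ lam) {A B : Matrix (Fin m) (Fin n) ℝ}
    (hB : ∀ C, frobSq (A - B) + 2 * lam * g B ≤ frobSq (A - C) + 2 * lam * g C)
    (C : Matrix (Fin m) (Fin n) ℝ) :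
    frobInner (A - B) (C - B) ≤ lam * (g C - g B) := by
  refine le_of_forall_le_add_mul (b := frobSq (C - B) / 2) fun t ⟨ht0, ht1⟩ => ?_
  have hmin := hB (B + t • (C - B))
  rw [frobSq_sub_add_smul_sub] at hmin
  have hconv : g (B + t • (C - B)) ≤ (1 - t) * g B + t * g C := by
    have hseg : B + t • (C - B) = (1 - t) • B + t • C := by module
    simpa only [hseg, smul_eq_mul] using
      hg.2 (Set.mem_univ B) (Set.mem_univ C) (sub_nonneg.2 ht1) ht0.le (by ring)
  have hscaled : 2 * t * frobInner (A - B) (C - B) ≤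
      2 * t * (lam * (g C - g B) + t * (frobSq (C - B) / 2)) := by
    linarith [mul_le_mul_of_nonneg_left hconv hlam]
  exact le_of_mul_le_mul_left hscaled (by positivity)

theorem IsSVT.frobInner_sub_le {m n : ℕ} {lam : ℝ} {A B : Matrix (Fin m) (Fin n) ℝ}
    (h : IsSVT lam A B) (hlam : 0 ≤ lam) (C : Matrix (Fin m) (Fin n) ℝ) :
    frobInner (A - B) (C - B) ≤ lam * (nuclearNorm C - nuclearNorm B) :=
  convexOn_nuclearNorm.frobInner_sub_le_of_minimizes hlam h C

theorem descent_bound_entry {τ x : ℝ} (hτ : 0 ≤ τ) (hτx : τ * x ^ 2 ≤ 1) (y θ θ₀ θ₁ μ μ₀ : ℝ) :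
    (θ₁ - θ) ^ 2 - (θ₀ - θ) ^ 2 ≤
      τ * (y - μ - x * θ) ^ 2 - τ * (y - μ₀ - x * θ₁) ^ 2
        + 2 * τ * ((y - x * θ₀ - μ₀) * (μ - μ₀))
        + 2 * ((θ₀ - τ * (x * (x * θ₀ - y + μ₀)) - θ₁) * (θ - θ₁)) := by
  -- The gap is the convexity defect of the loss plus the slack of the step-size condition.
  have gap : τ * (y - μ - x * θ) ^ 2 - τ * (y - μ₀ - x * θ₁) ^ 2
        + 2 * τ * ((y - x * θ₀ - μ₀) * (μ - μ₀))
        + 2 * ((θ₀ - τ * (x * (x * θ₀ - y + μ₀)) - θ₁) * (θ - θ₁))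
        - ((θ₁ - θ) ^ 2 - (θ₀ - θ) ^ 2)
      = τ * (μ₀ - μ + x * (θ₀ - θ)) ^ 2 + (1 - τ * x ^ 2) * (θ₁ - θ₀) ^ 2 := by
    ring
  have : 0 ≤ (1 - τ * x ^ 2) * (θ₁ - θ₀) ^ 2 := mul_nonneg (sub_nonneg.2 hτx) (sq_nonneg _)
  linarith [mul_nonneg hτ (sq_nonneg (μ₀ - μ + x * (θ₀ - θ)))]

theorem frobSq_descent_bound {N T : ℕ} {τ : ℝ} {X : Matrix (Fin N) (Fin T) ℝ} (hτ : 0 ≤ τ)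
    (hτX : ∀ i t, τ * X i t ^ 2 ≤ 1) (Y Θ Θ₀ Θ₁ M M₀ : Matrix (Fin N) (Fin T) ℝ) :
    frobSq (Θ₁ - Θ) - frobSq (Θ₀ - Θ) ≤
      τ * frobSq (Y - M - X ⊙ Θ) - τ * frobSq (Y - M₀ - X ⊙ Θ₁)
        + 2 * τ * frobInner (Y - X ⊙ Θ₀ - M₀) (M - M₀)
        + 2 * frobInner (Θ₀ - τ • (X ⊙ (X ⊙ Θ₀ - Y + M₀)) - Θ₁) (Θ - Θ₁) := by
  simp only [frobSq, frobInner, Matrix.sub_apply, Matrix.add_apply, Matrix.smul_apply,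
    hadamard_apply, smul_eq_mul, Finset.mul_sum, ← Finset.sum_sub_distrib,
    ← Finset.sum_add_distrib]
  exact Finset.sum_le_sum fun i _ => Finset.sum_le_sum fun t _ =>
    descent_bound_entry hτ (hτX i t) ..

/-- descent lemma for the joint SVT iteration. For any `(Θ, M)`, any
step size `τ ∈ (0, 1/max_{it} x_{it}²)`, and any `k ≥ 1`,
`F(Θ, M) − F(Θ_{k+1}, M_{k+1}) ≥ τ⁻¹ (‖Θ_{k+1} − Θ‖_F² − ‖Θ_k − Θ‖_F²)`. -/
theorem stmt8 {N T : ℕ} (Y X : Matrix (Fin N) (Fin T) ℝ) (ν₁ ν₂ τ : ℝ)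
    (hν₁ : 0 < ν₁) (hν₂ : 0 < ν₂) (hτ : 0 < τ) (hτX : ∀ i t, τ * X i t ^ 2 < 1)
    (Θ M : ℕ → Matrix (Fin N) (Fin T) ℝ)
    (hΘ : ∀ k, IsSVT (τ * ν₁ / 2) (Θ k - τ • (X ⊙ (X ⊙ Θ k - Y + M k))) (Θ (k + 1)))
    (hM : ∀ k, IsSVT (ν₂ / 2) (Y - X ⊙ Θ (k + 1)) (M (k + 1))) :
    ∀ (Θ' M' : Matrix (Fin N) (Fin T) ℝ) (k : ℕ), 1 ≤ k →
      Fobj Y X ν₁ ν₂ Θ' M' - Fobj Y X ν₁ ν₂ (Θ (k + 1)) (M (k + 1)) ≥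
        τ⁻¹ * (frobSq (Θ (k + 1) - Θ') - frobSq (Θ k - Θ')) := by
  intro Θ' M' k hk
  -- `M k` is itself an SVT output only for `k ≥ 1`.
  obtain ⟨k, rfl⟩ := Nat.exists_eq_add_of_le' hk
  have hΘstep := (hΘ (k + 1)).frobInner_sub_le (by positivity) Θ'
  have hMstep := mul_le_mul_of_nonneg_left ((hM k).frobInner_sub_le (by positivity) M') hτ.le
  have hMmin := mul_le_mul_of_nonneg_left (hM (k + 1) (M (k + 1))) hτ.le
  rw [sub_right_comm Y _ (M (k + 1 + 1)), sub_right_comm Y _ (M (k + 1))] at hMmin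
  have hquad := frobSq_descent_bound hτ.le (fun i t => (hτX i t).le) Y Θ' (Θ (k + 1))
    (Θ (k + 1 + 1)) M' (M (k + 1))
  rw [ge_iff_le, inv_mul_le_iff₀ hτ, Fobj, Fobj]
  linarith
end

section
/- The soft singular value thresholding operator solves the nuclear-norm proximal problem: for any matrix Y and λ > 0, S_λ(Y) = argmin_M ‖Y − M‖_F² + 2λ‖M‖_n, where S_λ(Y) = UD_λV' with Y = UDV' the SVD and D_λ the diagonal matrix with entries max(D_{ii} − λ, 0). -/
/-! Both `frobSq` and `nuclearNorm` are invariant under `A ↦ Q * A * Pᵀ` for orthogonal `Q`,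
`P`, so after conjugating by the SVD of `Y` we may assume `Y = D` is rectangular-diagonal.
Restricting attention to the diagonal positions, the Frobenius term can only drop, while the
nuclear norm of any `M` dominates `∑ |M i i|`: write `M = B * Wᵀ` with `W` an orthonormal
eigenbasis of `Mᵀ * M`, so that the columns of `B` have norms the singular values, and apply
Cauchy–Schwarz along the diagonal. The problem thus splits into the scalar problems
`min_m (d - m)² + 2λ|m|`, each solved by `m = max (d - λ) 0`, and the thresholded matrix
attains this entrywise bound. -/

open Matrix BigOperators

open scoped MatrixOrder

section Matching

variable {α β : Type*} {s : Finset (α × β)}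

lemma sum_fst_le_sum_of_injOn [Fintype α] (hs : Set.InjOn Prod.fst (s : Set (α × β)))
    {f : α → ℝ} (hf : ∀ a, 0 ≤ f a) :
    ∑ p ∈ s, f p.1 ≤ ∑ a, f a := by
  classical
  rw [← Finset.sum_image hs]
  exact Finset.sum_le_univ_sum_of_nonneg hf

lemma sum_snd_le_sum_of_injOn [Fintype β] (hs : Set.InjOn Prod.snd (s : Set (α × β)))
    {f : β → ℝ} (hf : ∀ b, 0 ≤ f b) :
    ∑ p ∈ s, f p.2 ≤ ∑ b, f b := by
  classical
  rw [← Finset.sum_image hs]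
  exact Finset.sum_le_univ_sum_of_nonneg hf

lemma sum_abs_mul_abs_le_of_injOn [Fintype α] [Fintype β]
    (hs₁ : Set.InjOn Prod.fst (s : Set (α × β)))
    (hs₂ : Set.InjOn Prod.snd (s : Set (α × β)))
    (b : α → ℝ) (w : β → ℝ) :
    ∑ p ∈ s, |b p.1| * |w p.2| ≤ √(∑ a, b a ^ 2) * √(∑ c, w c ^ 2) := by
  refine (Real.sum_mul_le_sqrt_mul_sqrt s _ _).trans ?_
  simp only [sq_abs]
  gcongr
  · exact sum_fst_le_sum_of_injOn hs₁ fun a => sq_nonneg (b a)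
  · exact sum_snd_le_sum_of_injOn hs₂ fun c => sq_nonneg (w c)

end Matching

section MatrixFacts

variable {m n : Type*} [Fintype m]

lemma Matrix.transpose_mul_self_apply_self (A : Matrix m n ℝ) (j : n) :
    (Aᵀ * A) j j = ∑ i, A i j ^ 2 := by
  simp only [mul_apply, transpose_apply, sq]

lemma Matrix.transpose_mul_self_of_orthogonal_mul [DecidableEq m] {Q : Matrix m m ℝ}
    (hQ : Qᵀ * Q = 1) (A : Matrix m n ℝ) : (Q * A)ᵀ * (Q * A) = Aᵀ * A := by
  rw [transpose_mul, Matrix.mul_assoc, ← Matrix.mul_assoc Qᵀ, hQ, Matrix.one_mul]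

lemma Matrix.transpose_mul_self_mul_transpose [Fintype n] (A : Matrix m n ℝ)
    (P : Matrix n n ℝ) :
    (A * Pᵀ)ᵀ * (A * Pᵀ) = P * (Aᵀ * A) * Pᵀ := by
  simp only [transpose_mul, transpose_transpose, Matrix.mul_assoc]

lemma Matrix.sqrt_mul_mul_transpose [DecidableEq m] [Fintype n] [DecidableEq n] {P : Matrix m n ℝ}
    (hP : Pᵀ * P = 1) {X : Matrix n n ℝ} (hX : 0 ≤ X) :
    CFC.sqrt (P * X * Pᵀ) = P * CFC.sqrt X * Pᵀ := by
  refine CFC.sqrt_unique ?_ ?_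
  · calc P * CFC.sqrt X * Pᵀ * (P * CFC.sqrt X * Pᵀ)
        = P * (CFC.sqrt X * (Pᵀ * P) * CFC.sqrt X) * Pᵀ := by simp only [Matrix.mul_assoc]
      _ = P * X * Pᵀ := by rw [hP, Matrix.mul_one, CFC.sqrt_mul_sqrt_self X hX]
  · simpa [conjTranspose_eq_transpose_of_trivial] using
      (CFC.sqrt_nonneg X).posSemidef.mul_mul_conjTranspose_same P |>.nonneg

lemma Matrix.trace_sqrt_eq_sum_sqrt_eigenvalues [DecidableEq m] {X : Matrix m m ℝ}
    (hX : X.PosSemidef) : (CFC.sqrt X).trace = ∑ j, √(hX.1.eigenvalues j) := by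
  rw [CFC.sqrt_eq_cfc, cfc_nnreal_eq_real _ X hX.nonneg, hX.1.cfc_eq, IsHermitian.cfc,
    Unitary.conjStarAlgAut_apply, trace_mul_cycle,
    (mem_unitaryGroup_iff').mp hX.1.eigenvectorUnitary.2, Matrix.one_mul, trace_diagonal]
  simp [Real.coe_sqrt, Real.coe_toNNReal', hX.eigenvalues_nonneg]

end MatrixFacts

section Norms

variable {N T : ℕ}

lemma frobSq_eq_trace (A : Matrix (Fin N) (Fin T) ℝ) : frobSq A = (Aᵀ * A).trace := by
  simp only [frobSq, trace, diag_apply, transpose_mul_self_apply_self]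
  exact Finset.sum_comm

lemma frobSq_eq_sum_prod (A : Matrix (Fin N) (Fin T) ℝ) :
    frobSq A = ∑ p : Fin N × Fin T, A p.1 p.2 ^ 2 :=
  (Fintype.sum_prod_type fun p => A p.1 p.2 ^ 2).symm

lemma frobSq_orthogonal_mul {Q : Matrix (Fin N) (Fin N) ℝ} (hQ : Qᵀ * Q = 1)
    (A : Matrix (Fin N) (Fin T) ℝ) : frobSq (Q * A) = frobSq A := by
  rw [frobSq_eq_trace, frobSq_eq_trace, transpose_mul_self_of_orthogonal_mul hQ]

lemma frobSq_mul_orthogonal_transpose {P : Matrix (Fin T) (Fin T) ℝ} (hP : Pᵀ * P = 1)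
    (A : Matrix (Fin N) (Fin T) ℝ) : frobSq (A * Pᵀ) = frobSq A := by
  rw [frobSq_eq_trace, frobSq_eq_trace, transpose_mul_self_mul_transpose, trace_mul_cycle, hP,
    Matrix.one_mul]

lemma nuclearNorm_eq_trace_sqrt (A : Matrix (Fin N) (Fin T) ℝ) :
    nuclearNorm A = (CFC.sqrt (Aᵀ * A)).trace := by
  have hA : (Aᵀ * A).PosSemidef := by
    simpa [conjTranspose_eq_transpose_of_trivial] using posSemidef_conjTranspose_mul_self A
  rw [trace_sqrt_eq_sum_sqrt_eigenvalues hA]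
  rfl

lemma nuclearNorm_orthogonal_mul {Q : Matrix (Fin N) (Fin N) ℝ} (hQ : Qᵀ * Q = 1)
    (A : Matrix (Fin N) (Fin T) ℝ) : nuclearNorm (Q * A) = nuclearNorm A := by
  rw [nuclearNorm_eq_trace_sqrt, nuclearNorm_eq_trace_sqrt,
    transpose_mul_self_of_orthogonal_mul hQ]

lemma nuclearNorm_mul_orthogonal_transpose {P : Matrix (Fin T) (Fin T) ℝ} (hP : Pᵀ * P = 1)
    (A : Matrix (Fin N) (Fin T) ℝ) : nuclearNorm (A * Pᵀ) = nuclearNorm A := by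
  have hAA : 0 ≤ Aᵀ * A := by
    simpa [conjTranspose_eq_transpose_of_trivial] using
      (posSemidef_conjTranspose_mul_self A).nonneg
  rw [nuclearNorm_eq_trace_sqrt, nuclearNorm_eq_trace_sqrt, transpose_mul_self_mul_transpose,
    sqrt_mul_mul_transpose hP hAA, trace_mul_cycle, hP, Matrix.one_mul]

end Norms

section Support

variable {N T : ℕ} {s : Finset (Fin N × Fin T)}

lemma sum_sq_le_frobSq (A : Matrix (Fin N) (Fin T) ℝ) :
    ∑ p ∈ s, A p.1 p.2 ^ 2 ≤ frobSq A := by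
  rw [frobSq_eq_sum_prod]
  exact Finset.sum_le_univ_sum_of_nonneg fun p => sq_nonneg _

lemma frobSq_eq_sum_of_support {A : Matrix (Fin N) (Fin T) ℝ}
    (hA : ∀ p ∉ s, A p.1 p.2 = 0) : frobSq A = ∑ p ∈ s, A p.1 p.2 ^ 2 := by
  rw [frobSq_eq_sum_prod]
  refine (Finset.sum_subset (Finset.subset_univ s) fun p _ hp => ?_).symm
  rw [hA p hp, zero_pow two_ne_zero]

lemma sum_abs_le_nuclearNorm (hs₁ : Set.InjOn Prod.fst (s : Set (Fin N × Fin T)))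
    (hs₂ : Set.InjOn Prod.snd (s : Set (Fin N × Fin T))) (A : Matrix (Fin N) (Fin T) ℝ) :
    ∑ p ∈ s, |A p.1 p.2| ≤ nuclearNorm A := by
  set hA := isHermitian_conjTranspose_mul_self A
  set W : Matrix (Fin T) (Fin T) ℝ := (hA.eigenvectorUnitary : Matrix (Fin T) (Fin T) ℝ)
  have hW : Wᵀ * W = 1 := (mem_unitaryGroup_iff').mp hA.eigenvectorUnitary.2
  have hW' : W * Wᵀ = 1 := (mem_unitaryGroup_iff).mp hA.eigenvectorUnitary.2
  have hAW : (A * W)ᵀ * (A * W) = diagonal hA.eigenvalues := by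
    have hdiag := hA.conjStarAlgAut_star_eigenvectorUnitary
    rw [Unitary.conjStarAlgAut_star_apply] at hdiag
    refine Eq.trans ?_ hdiag
    simp only [W, star_eq_conjTranspose, conjTranspose_eq_transpose_of_trivial, transpose_mul,
      Matrix.mul_assoc]
  have hcol (k : Fin T) : ∑ i, (A * W) i k ^ 2 = hA.eigenvalues k := by
    rw [← transpose_mul_self_apply_self, hAW, diagonal_apply_eq]
  have hWcol (k : Fin T) : ∑ j, W j k ^ 2 = 1 := by
    rw [← transpose_mul_self_apply_self, hW, one_apply_eq]
  have hentry (i : Fin N) (j : Fin T) : A i j = ∑ k, (A * W) i k * W j k := by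
    conv_lhs => rw [← Matrix.mul_one A, ← hW', ← Matrix.mul_assoc]
    rfl
  calc ∑ p ∈ s, |A p.1 p.2|
      ≤ ∑ p ∈ s, ∑ k, |(A * W) p.1 k| * |W p.2 k| := by
        refine Finset.sum_le_sum fun p _ => ?_
        rw [hentry]
        exact (Finset.abs_sum_le_sum_abs _ _).trans_eq (by simp only [abs_mul])
    _ = ∑ k, ∑ p ∈ s, |(A * W) p.1 k| * |W p.2 k| := Finset.sum_comm
    _ ≤ ∑ k, √(hA.eigenvalues k) := by
        refine Finset.sum_le_sum fun k _ => ?_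
        simpa only [hcol, hWcol, Real.sqrt_one, mul_one] using
          sum_abs_mul_abs_le_of_injOn hs₁ hs₂ (fun i => (A * W) i k) (fun j => W j k)
    _ = nuclearNorm A := rfl

lemma nuclearNorm_le_sum_abs_of_isDiag (A : Matrix (Fin N) (Fin T) ℝ) (hA : (Aᵀ * A).IsDiag) :
    nuclearNorm A ≤ ∑ i, ∑ j, |A i j| := by
  set d : Fin T → ℝ := fun j => ∑ i, A i j ^ 2
  have hsqrt : CFC.sqrt (Aᵀ * A) = diagonal fun j => √(d j) := by
    refine CFC.sqrt_unique ?_ ?_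
    · rw [diagonal_mul_diagonal, ← hA.diagonal_diag]
      congr 1
      funext j
      rw [Real.mul_self_sqrt (Finset.sum_nonneg fun i _ => sq_nonneg _), diag_apply,
        transpose_mul_self_apply_self]
    · exact (posSemidef_diagonal_iff.mpr fun j => Real.sqrt_nonneg _).nonneg
  rw [nuclearNorm_eq_trace_sqrt, hsqrt, trace_diagonal, Finset.sum_comm]
  refine Finset.sum_le_sum fun j _ => ?_
  rw [Real.sqrt_le_left (Finset.sum_nonneg fun i _ => abs_nonneg _)]
  simpa only [sq_abs] using Finset.sum_sq_le_sq_sum_of_nonneg fun i _ => abs_nonneg (A i j)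

lemma isDiag_transpose_mul_self_of_support (hs : Set.InjOn Prod.fst (s : Set (Fin N × Fin T)))
    {A : Matrix (Fin N) (Fin T) ℝ} (hA : ∀ p ∉ s, A p.1 p.2 = 0) : (Aᵀ * A).IsDiag := by
  intro j k hjk
  rw [mul_apply]
  refine Finset.sum_eq_zero fun i _ => ?_
  rw [transpose_apply]
  by_cases hij : (i, j) ∈ s
  · by_cases hik : (i, k) ∈ s
    · exact absurd (congrArg Prod.snd (hs hij hik rfl)) hjk
    · simp [hA _ hik]
  · simp [hA _ hij]

lemma nuclearNorm_le_sum_abs_of_support (hs : Set.InjOn Prod.fst (s : Set (Fin N × Fin T)))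
    {A : Matrix (Fin N) (Fin T) ℝ} (hA : ∀ p ∉ s, A p.1 p.2 = 0) :
    nuclearNorm A ≤ ∑ p ∈ s, |A p.1 p.2| := by
  refine (nuclearNorm_le_sum_abs_of_isDiag A
    (isDiag_transpose_mul_self_of_support hs hA)).trans_eq ?_
  rw [← Fintype.sum_prod_type fun p : Fin N × Fin T => |A p.1 p.2|]
  refine (Finset.sum_subset (Finset.subset_univ s) fun p _ hp => ?_).symm
  rw [hA p hp, abs_zero]

end Support

def softThreshold (lam d : ℝ) : ℝ := max (d - lam) 0

lemma sq_sub_softThreshold_add_le {lam d : ℝ} (hlam : 0 ≤ lam) (hd : 0 ≤ d) (m : ℝ) :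
    (d - softThreshold lam d) ^ 2 + 2 * lam * softThreshold lam d
      ≤ (d - m) ^ 2 + 2 * lam * |m| := by
  rcases le_total (d - lam) 0 with h | h
  · rw [softThreshold, max_eq_right h]
    rcases abs_cases m with ⟨hm, _⟩ | ⟨hm, _⟩ <;> rw [hm] <;> nlinarith
  · rw [softThreshold, max_eq_left h]
    nlinarith [sq_nonneg (d - m - lam), le_abs_self m]

def rectDiagonal (N T : ℕ) : Finset (Fin N × Fin T) := {p | (p.1 : ℕ) = p.2}

lemma mem_rectDiagonal {N T : ℕ} {p : Fin N × Fin T} :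
    p ∈ rectDiagonal N T ↔ (p.1 : ℕ) = p.2 := by
  simp [rectDiagonal]

lemma injOn_fst_rectDiagonal (N T : ℕ) :
    Set.InjOn Prod.fst (rectDiagonal N T : Set (Fin N × Fin T)) := by
  rintro ⟨i, j⟩ hij ⟨i', j'⟩ hij' (rfl : i = i')
  rw [Finset.mem_coe, mem_rectDiagonal] at hij hij'
  exact Prod.ext rfl (Fin.ext (hij.symm.trans hij'))

lemma injOn_snd_rectDiagonal (N T : ℕ) :
    Set.InjOn Prod.snd (rectDiagonal N T : Set (Fin N × Fin T)) := by
  rintro ⟨i, j⟩ hij ⟨i', j'⟩ hij' (rfl : j = j')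
  rw [Finset.mem_coe, mem_rectDiagonal] at hij hij'
  exact Prod.ext (Fin.ext (hij.trans hij'.symm)) rfl

def softThresholdDiag {N T : ℕ} (lam : ℝ) (D : Matrix (Fin N) (Fin T) ℝ) :
    Matrix (Fin N) (Fin T) ℝ :=
  of fun i j => if (i : ℕ) = (j : ℕ) then softThreshold lam (D i j) else 0

lemma frobSq_sub_softThresholdDiag_add_le {N T : ℕ} {lam : ℝ} (hlam : 0 ≤ lam)
    {D : Matrix (Fin N) (Fin T) ℝ}
    (hDdiag : ∀ (i : Fin N) (j : Fin T), (i : ℕ) ≠ (j : ℕ) → D i j = 0)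
    (hDpos : ∀ i j, 0 ≤ D i j)
    (M : Matrix (Fin N) (Fin T) ℝ) :
    frobSq (D - softThresholdDiag lam D) + 2 * lam * nuclearNorm (softThresholdDiag lam D)
      ≤ frobSq (D - M) + 2 * lam * nuclearNorm M := by
  set s := rectDiagonal N T
  set S := softThresholdDiag lam D
  have hS {p : Fin N × Fin T} (hp : p ∈ s) : S p.1 p.2 = softThreshold lam (D p.1 p.2) := by
    simp [S, softThresholdDiag, mem_rectDiagonal.mp hp]
  have hS_supp : ∀ p ∉ s, S p.1 p.2 = 0 := fun p hp => by
    simp [S, softThresholdDiag, mem_rectDiagonal.not.mp hp]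
  have hDS_supp : ∀ p ∉ s, (D - S) p.1 p.2 = 0 := fun p hp => by
    rw [Matrix.sub_apply, hS_supp p hp, hDdiag _ _ (mem_rectDiagonal.not.mp hp), sub_zero]
  calc frobSq (D - S) + 2 * lam * nuclearNorm S
      ≤ ∑ p ∈ s, (D - S) p.1 p.2 ^ 2 + 2 * lam * ∑ p ∈ s, |S p.1 p.2| := by
        rw [frobSq_eq_sum_of_support hDS_supp]
        gcongr
        exact nuclearNorm_le_sum_abs_of_support (injOn_fst_rectDiagonal N T) hS_supp
    _ = ∑ p ∈ s, ((D p.1 p.2 - softThreshold lam (D p.1 p.2)) ^ 2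
          + 2 * lam * softThreshold lam (D p.1 p.2)) := by
        rw [Finset.mul_sum, ← Finset.sum_add_distrib]
        refine Finset.sum_congr rfl fun p hp => ?_
        rw [Matrix.sub_apply, hS hp, abs_of_nonneg (le_max_right _ _)]
    _ ≤ ∑ p ∈ s, ((D p.1 p.2 - M p.1 p.2) ^ 2 + 2 * lam * |M p.1 p.2|) :=
        Finset.sum_le_sum fun p _ => sq_sub_softThreshold_add_le hlam (hDpos _ _) _
    _ ≤ frobSq (D - M) + 2 * lam * nuclearNorm M := by
        rw [Finset.sum_add_distrib, ← Finset.mul_sum]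
        gcongr
        · exact sum_sq_le_frobSq (D - M)
        · exact sum_abs_le_nuclearNorm (injOn_fst_rectDiagonal N T) (injOn_snd_rectDiagonal N T) M

/-- soft singular value thresholding solves the nuclear-norm prox problem.
If `Y = U D Vᵀ` is an SVD of `Y` (with `U`, `V` orthogonal and `D` rectangular-diagonal with
nonnegative entries), then `S_λ(Y) = U D_λ Vᵀ`, where `D_λ` soft-thresholds the diagonal,
minimizes `M ↦ ‖Y − M‖_F² + 2λ‖M‖ₙ`. -/
theorem stmt9 {N T : ℕ} (Y : Matrix (Fin N) (Fin T) ℝ)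
    (U : Matrix (Fin N) (Fin N) ℝ) (V : Matrix (Fin T) (Fin T) ℝ)
    (D : Matrix (Fin N) (Fin T) ℝ) (lam : ℝ) (hlam : 0 < lam)
    (hU : Uᵀ * U = 1) (hU' : U * Uᵀ = 1) (hV : Vᵀ * V = 1) (hV' : V * Vᵀ = 1)
    (hDdiag : ∀ (i : Fin N) (j : Fin T), (i : ℕ) ≠ (j : ℕ) → D i j = 0)
    (hDpos : ∀ (i : Fin N) (j : Fin T), 0 ≤ D i j)
    (hY : Y = U * D * Vᵀ) :
    ∀ M : Matrix (Fin N) (Fin T) ℝ,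
      frobSq (Y - U * (Matrix.of fun (i : Fin N) (j : Fin T) =>
            if (i : ℕ) = (j : ℕ) then max (D i j - lam) 0 else 0) * Vᵀ)
          + 2 * lam * nuclearNorm (U * (Matrix.of fun (i : Fin N) (j : Fin T) =>
            if (i : ℕ) = (j : ℕ) then max (D i j - lam) 0 else 0) * Vᵀ)
        ≤ frobSq (Y - M) + 2 * lam * nuclearNorm M := by
  intro M
  change frobSq (Y - U * softThresholdDiag lam D * Vᵀ)
      + 2 * lam * nuclearNorm (U * softThresholdDiag lam D * Vᵀ) ≤ _
  have hM : M = U * (Uᵀ * M * V) * Vᵀ := by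
    simp only [← Matrix.mul_assoc, hU', Matrix.one_mul]
    rw [Matrix.mul_assoc, hV', Matrix.mul_one]
  have hY_sub (X : Matrix (Fin N) (Fin T) ℝ) : Y - U * X * Vᵀ = U * (D - X) * Vᵀ := by
    rw [hY, Matrix.mul_sub, Matrix.sub_mul]
  rw [hM, hY_sub, hY_sub]
  simp only [frobSq_mul_orthogonal_transpose hV, frobSq_orthogonal_mul hU,
    nuclearNorm_mul_orthogonal_transpose hV, nuclearNorm_orthogonal_mul hU]
  exact frobSq_sub_softThresholdDiag_add_le hlam.le hDdiag hDpos _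
end
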